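/- (Stability implies preservation for a store at the path itself.) Let (s, h) be well-behaved, π acyclic and disconnected in (s, h), and consider executing π := x where x ≠ root(π) and ⟨π⟩_{s,h} ∈ dom h, yielding state (s, h[⟨π⟩_{s,h} ↦ s(x)]). Then π is preserved from (s, h) to the new state: its address and footprint domain are unchanged, and π remains acyclic and disconnected. -/
import Mathlib


/-- Variables. -/
abbrev Var := ℕ
/-- Fld names. -/
abbrev Fld := ℕ
/-- Object locations. -/
abbrev Loc := ℕ
/-- Addresses in the field-splitting style. -/
abbrev Addr := Loc × Fld
/-- Stacks (stores). -/
abbrev Stack := Var → Loc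
/-- Partial heaps. -/
abbrev Heap := Addr → Option Loc

/-- Follow a list of fields starting from a given address. -/
def lvalAux (h : Heap) : Addr → List Fld → Option Addr
  | a, [] => some a
  | a, f :: fs => (h a).bind fun ℓ => lvalAux h (ℓ, f) fs

/-- The address `⟨x.fs⟩_{s,h}` of the access path `x.fs`
    (`none` if undefined, and paths must have a nonempty field list). -/
def lval (s : Stack) (h : Heap) (x : Var) : List Fld → Option Addr
  | [] => none
  | f :: fs => lvalAux h (s x, f) fs

/-- Domain of a partial map. -/
def pdom {β : Type} (m : Addr → Option β) : Set Addr := {a | (m a).isSome}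

/-- Domain of a heap. -/
def hdom (h : Heap) : Set Addr := {a | (h a).isSome}

/-- The locations underlying a set of addresses. -/
def locs (A : Set Addr) : Set Loc := Prod.fst '' A

/-- The set of addresses of all (nonempty) prefixes of the path `x.fs`:
    the domain of its footprint. -/
def footDom (s : Stack) (h : Heap) (x : Var) (fs : List Fld) : Set Addr :=
  {a | ∃ gs : List Fld, gs ≠ [] ∧ gs <+: fs ∧ lval s h x gs = some a}

open Classical in
/-- The footprint `h⟨s, x.fs⟩` of the path `x.fs`: the partial map defined exactly
    on the addresses of prefixes of the path, mapping `⟨π'⟩` to `h ⟨π'⟩`. -/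
noncomputable def footprint (s : Stack) (h : Heap) (x : Var) (fs : List Fld) :
    Addr → Option (Option Loc) :=
  fun a => if a ∈ footDom s h x fs then some (h a) else none

/-- Acyclicity of the path `x.fs` in state `(s, h)`. -/
def Acyclic (s : Stack) (h : Heap) (x : Var) (fs : List Fld) : Prop :=
  (lval s h x fs).isSome ∧
  ∀ (gs' gs : List Fld) (a a' : Addr), gs' ≠ [] → gs' <+: gs → gs <+: fs →
    lval s h x gs = some a → lval s h x gs' = some a' → h a ≠ some a'.1

/-- Disconnectedness of the path `x.fs` in state `(s, h)`. -/
def Disconnected (s : Stack) (h : Heap) (x : Var) (fs : List Fld) : Prop :=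
  (lval s h x fs).isSome ∧
  (∀ y, y ≠ x → s y ∉ locs (footDom s h x fs)) ∧
  (∀ a ℓ, h a = some ℓ → ℓ ∈ locs (footDom s h x fs) → a ∈ footDom s h x fs)

/-- The path `x.fs` is preserved from `(s, h)` to `(s', h')`. -/
def Preserved (x : Var) (fs : List Fld) (s : Stack) (h : Heap)
    (s' : Stack) (h' : Heap) : Prop :=
  Disconnected s h x fs ∧ Acyclic s h x fs ∧
  Disconnected s' h' x fs ∧ Acyclic s' h' x fs ∧
  s x = s' x ∧
  footDom s h x fs = footDom s' h' x fs ∧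
  (∀ a ∈ footDom s h x fs, lval s h x fs ≠ some a → h a = h' a)

/-- Well-behavedness of a state. -/
def WellBehaved (s : Stack) (h : Heap) : Prop :=
  (∀ y, s y ∈ locs (hdom h)) ∧ (∀ a ℓ, h a = some ℓ → ℓ ∈ locs (hdom h))
lemma lvalAux_append (h : Heap) (b : Addr) (fs gs : List Fld) :
    lvalAux h b (fs ++ gs) = (lvalAux h b fs).bind (fun c => lvalAux h c gs) := by
  induction fs generalizing b with
  | nil => simp [lvalAux]
  | cons f fs ih =>
    cases hb : h b <;> simp [lvalAux, hb, ih]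

lemma lval_append (s : Stack) (h : Heap) (z : Var) (fs gs : List Fld) (hfs : fs ≠ []) :
    lval s h z (fs ++ gs) = (lval s h z fs).bind (fun c => lvalAux h c gs) := by
  cases fs with
  | nil => exact absurd rfl hfs
  | cons f fs => simp [lval, lvalAux_append]

lemma tip_ne (s : Stack) (h : Heap) (z : Var) (fs : List Fld)
    (hac : Acyclic s h z fs) (a : Addr) (ha : lval s h z fs = some a)
    (p : List Fld) (hp : p <+: fs) (hlt : p.length < fs.length)
    (b : Addr) (hb : lval s h z p = some b) : b ≠ a := by
  have hpne : p ≠ [] := by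
    rintro rfl; simp [lval] at hb
  obtain ⟨t, ht⟩ := hp
  have htne : t ≠ [] := by
    rintro rfl; simp at ht; exact absurd hlt (by simp [ht])
  obtain ⟨g, r, rfl⟩ : ∃ g r, t = g :: r := by
    cases t with
    | nil => exact absurd rfl htne
    | cons g r => exact ⟨g, r, rfl⟩
  have hfs : lval s h z (p ++ g :: r) = some a := ht ▸ ha
  rw [lval_append s h z p (g :: r) hpne, hb] at hfs
  simp [lvalAux] at hfs
  obtain ⟨ℓ, hℓ, hrest⟩ : ∃ ℓ, h b = some ℓ ∧ lvalAux h (ℓ, g) r = some a := by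
    cases hhb : h b with
    | none => rw [hhb] at hfs; simp at hfs
    | some ℓ => rw [hhb] at hfs; exact ⟨ℓ, rfl, hfs⟩
  intro hba
  subst hba
  have hpg : lval s h z (p ++ [g]) = some (ℓ, g) := by
    rw [lval_append s h z p [g] hpne, hb]
    simp [lvalAux, hℓ]
  exact hac.2 (p ++ [g]) fs b (ℓ, g) (by simp) ⟨r, by rw [← ht]; simp⟩
    List.prefix_rfl ha hpg hℓ

lemma lval_update (s : Stack) (h : Heap) (z : Var) (fs : List Fld)
    (hac : Acyclic s h z fs) (a : Addr) (ha : lval s h z fs = some a) (v : Option Loc) :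
    ∀ gs, gs <+: fs → lval s (Function.update h a v) z gs = lval s h z gs := by
  intro gs
  induction gs using List.reverseRecOn with
  | nil => intro _; rfl
  | append_singleton gs g ih =>
    intro hpre
    have hgs : gs <+: fs := ((gs.prefix_append [g]).trans hpre)
    have hlt : gs.length < fs.length := by
      have := hpre.length_le
      simp at this; omega
    cases hgsne : gs with
    | nil => simp [lval, lvalAux]
    | cons f rest =>
      rw [← hgsne]
      have hne : gs ≠ [] := by rw [hgsne]; simp
      rw [lval_append _ _ _ gs [g] hne, lval_append _ _ _ gs [g] hne, ih hgs]
      cases hb : lval s h z gs with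
      | none => rfl
      | some b =>
        have hba : b ≠ a := tip_ne s h z fs hac a ha gs hgs hlt b hb
        simp [lvalAux, Function.update_of_ne hba]

/-- (Stability implies preservation for a store at the path itself.)
Let `(s, h)` be well-behaved and `π = z.fs` acyclic and disconnected in `(s, h)`.
Executing `π := x`, where `x ≠ z = root π` and `⟨π⟩ ∈ dom h`, yields
`(s, h[⟨π⟩ ↦ s x])`, and `π` is preserved from `(s, h)` to the new state: its address
and footprint domain are unchanged, and it remains acyclic and disconnected. -/
theorem store_at_path_preserves (s : Stack) (h : Heap) (z x : Var)
    (fs : List Fld)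
    (hwb : WellBehaved s h)
    (hac : Acyclic s h z fs) (hdisc : Disconnected s h z fs)
    (hx : x ≠ z)
    (a : Addr) (ha : lval s h z fs = some a) (hadom : a ∈ hdom h) :
    Preserved z fs s h s (Function.update h a (some (s x))) ∧
    lval s (Function.update h a (some (s x))) z fs = some a ∧
    footDom s h z fs = footDom s (Function.update h a (some (s x))) z fs := by
  set h' := Function.update h a (some (s x)) with hh'
  have hlv : ∀ gs, gs <+: fs → lval s h' z gs = lval s h z gs :=
    lval_update s h z fs hac a ha (some (s x))
  have hfd : footDom s h z fs = footDom s h' z fs := by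
    ext b
    constructor
    · rintro ⟨gs, hne, hpre, hl⟩
      exact ⟨gs, hne, hpre, (hlv gs hpre).symm ▸ hl⟩
    · rintro ⟨gs, hne, hpre, hl⟩
      exact ⟨gs, hne, hpre, (hlv gs hpre) ▸ hl⟩
  have haddr : lval s h' z fs = some a := (hlv fs List.prefix_rfl).trans ha
  have hsx : s x ∉ locs (footDom s h z fs) := hdisc.2.1 x hx
  have hac' : Acyclic s h' z fs := by
    refine ⟨by rw [haddr]; simp, ?_⟩
    intro gs' gs a₀ a' hne hpre1 hpre2 hl hl'
    rw [hlv gs hpre2] at hl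
    rw [hlv gs' (hpre1.trans hpre2)] at hl'
    by_cases hcase : a₀ = a
    · subst hcase
      have : h' a₀ = some (s x) := Function.update_self _ _ _
      rw [this]
      intro hcontr
      apply hsx
      refine ⟨a', ⟨gs', hne, hpre1.trans hpre2, hl'⟩, ?_⟩
      exact (Option.some_injective _ hcontr).symm
    · rw [hh', Function.update_of_ne hcase]
      exact hac.2 gs' gs a₀ a' hne hpre1 hpre2 hl hl'
  have hdisc' : Disconnected s h' z fs := by
    refine ⟨by rw [haddr]; simp, ?_, ?_⟩
    · intro y hy
      rw [← hfd]
      exact hdisc.2.1 y hy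
    · intro b ℓ hb hℓ
      rw [← hfd] at hℓ ⊢
      by_cases hcase : b = a
      · subst hcase
        rw [hh', Function.update_self] at hb
        exact absurd ((Option.some_injective _ hb) ▸ hℓ) hsx
      · rw [hh', Function.update_of_ne hcase] at hb
        exact hdisc.2.2 b ℓ hb hℓ
  refine ⟨⟨hdisc, hac, hdisc', hac', rfl, hfd, ?_⟩, haddr, hfd⟩
  intro a₀ _ hna
  have : a₀ ≠ a := fun hcontr => hna (hcontr ▸ ha)
  rw [hh', Function.update_of_ne this]
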